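/- arXiv:1904.11050 — 3 statements merged into one kernel-verified Lean document; each statement's English description precedes it below -/
import Mathlib

section
/- With the setup of the previous statement, if the right endpoint of e lies in I_e, then ∏_T is contained in the half-space {x : ∑_{j∈I_e} x_j ≥ c_e}; otherwise ∏_T is contained in {x : ∑_{j∈I_e} x_j ≤ c_e}. -/
open SimpleGraph Sum Finset

/-- The coordinate simplex `Δ_I ⊆ ℝ^n`. -/
def simplexOn {n : ℕ} (I : Set (Fin n)) : Set (Fin n → ℝ) :=
  {x | (∀ j, 0 ≤ x j) ∧ (∀ j, j ∉ I → x j = 0) ∧ ∑ j, x j = 1}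

/-- The Minkowski sum `y_1 Δ_{A 1} + ⋯ + y_m Δ_{A m}`. -/
def mink {m n : ℕ} (y : Fin m → ℝ) (A : Fin m → Set (Fin n)) : Set (Fin n → ℝ) :=
  {x | ∃ p : Fin m → Fin n → ℝ, (∀ i, p i ∈ simplexOn (A i)) ∧ x = ∑ i, y i • p i}

open scoped Classical in
/-- With the setup of Statement 2: if the right endpoint `b̄` of
`e` lies in `I_e`, then `∏_T` lies in the half-space `∑_{j∈I_e} x_j ≥ c_e`;
otherwise `∏_T` lies in `∑_{j∈I_e} x_j ≤ c_e`. -/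
theorem cell_halfspace_sign (m n : ℕ) [NeZero n]
    (G T : SimpleGraph (Fin m ⊕ Fin n))
    (hGbip : (∀ i j : Fin m, ¬ G.Adj (inl i) (inl j)) ∧
             (∀ i j : Fin n, ¬ G.Adj (inr i) (inr j)))
    (hsub : T ≤ G) (htree : T.IsTree)
    (y : Fin m → ℝ) (hy : ∀ i, 0 ≤ y i)
    (a : Fin m) (b : Fin n) (hab : T.Adj (inl a) (inr b))
    (hnotleaf : 2 ≤ (T.neighborSet (inl a)).ncard) :
    ((T.deleteEdges {s(inl a, inr b)}).Reachable (inr b) (inr 0) →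
      ∀ x ∈ mink y (fun i => {j : Fin n | T.Adj (inl i) (inr j)}),
        (∑ i : Fin m,
            if (T.deleteEdges {s(inl a, inr b)}).Reachable (inl i) (inr 0) then y i else 0)
          ≤ ∑ j : Fin n,
            if (T.deleteEdges {s(inl a, inr b)}).Reachable (inr j) (inr 0) then x j else 0) ∧
    (¬ (T.deleteEdges {s(inl a, inr b)}).Reachable (inr b) (inr 0) →
      ∀ x ∈ mink y (fun i => {j : Fin n | T.Adj (inl i) (inr j)}),
        (∑ j : Fin n,
            if (T.deleteEdges {s(inl a, inr b)}).Reachable (inr j) (inr 0) then x j else 0)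
          ≤ ∑ i : Fin m,
            if (T.deleteEdges {s(inl a, inr b)}).Reachable (inl i) (inr 0) then y i else 0) := by
  classical
  set T' := T.deleteEdges {s(inl a, inr b)} with hT'
  -- The deleted edge is a bridge of the tree T.
  have hbridge : ¬ T'.Reachable (inl a) (inr b) :=
    (isBridge_iff.mp (isAcyclic_iff_forall_adj_isBridge.mp htree.IsAcyclic hab))
  -- adjacency in T' for edges other than e
  have hadj' : ∀ (i : Fin m) (j : Fin n), T.Adj (inl i) (inr j) → ¬(i = a ∧ j = b) →
      T'.Adj (inl i) (inr j) := by
    intro i j hij hne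
    rw [hT', SimpleGraph.deleteEdges_adj]
    refine ⟨hij, ?_⟩
    simp only [Set.mem_singleton_iff, Sym2.eq_iff]
    rintro (⟨h1, h2⟩ | ⟨h1, h2⟩)
    · exact hne ⟨inl.inj h1, inr.inj h2⟩
    · exact absurd h1 (by simp)
  -- every vertex lies in the component of inl a or of inr b
  have step : ∀ u v : Fin m ⊕ Fin n, T.Adj u v →
      (T'.Reachable u (inl a) ∨ T'.Reachable u (inr b)) →
      (T'.Reachable v (inl a) ∨ T'.Reachable v (inr b)) := by
    intro u v huv h
    by_cases he : s(u, v) = s(inl a, inr b)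
    · rcases Sym2.eq_iff.mp he with ⟨rfl, rfl⟩ | ⟨rfl, rfl⟩
      · exact Or.inr (Reachable.refl _)
      · exact Or.inl (Reachable.refl _)
    · have hadj : T'.Adj v u := by
        rw [hT', SimpleGraph.deleteEdges_adj]
        refine ⟨huv.symm, ?_⟩
        simpa [Sym2.eq_swap] using he
      rcases h with h | h
      · exact Or.inl (hadj.reachable.trans h)
      · exact Or.inr (hadj.reachable.trans h)
  have hcomp' : ∀ (u v : Fin m ⊕ Fin n), T.Walk u v →
      (T'.Reachable u (inl a) ∨ T'.Reachable u (inr b)) →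
      (T'.Reachable v (inl a) ∨ T'.Reachable v (inr b)) := by
    intro u v w
    induction w with
    | nil => exact id
    | cons h p ih => intro hu; exact ih (step _ _ h hu)
  have hcomp : ∀ v, T'.Reachable v (inl a) ∨ T'.Reachable v (inr b) := fun v =>
    hcomp' _ v (htree.isConnected.preconnected (inl a) v).some (Or.inl (Reachable.refl _))
  -- reachability equivalence along non-deleted edges
  have hequiv : ∀ (i : Fin m) (j : Fin n), T.Adj (inl i) (inr j) → ¬(i = a ∧ j = b) →
      (T'.Reachable (inl i) (inr 0) ↔ T'.Reachable (inr j) (inr 0)) := by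
    intro i j hij hne
    have h := hadj' i j hij hne
    exact ⟨fun hr => h.symm.reachable.trans hr, fun hr => h.reachable.trans hr⟩
  constructor
  · -- case: inr b in the component of inr 0
    intro hb x hx
    obtain ⟨p, hp, rfl⟩ := hx
    have hna : ¬ T'.Reachable (inl a) (inr 0) := fun ha => hbridge (ha.trans hb.symm)
    have hswap : (∑ j, if T'.Reachable (inr j) (inr 0) then (∑ i, y i • p i) j else 0)
        = ∑ i, y i * ∑ j, (if T'.Reachable (inr j) (inr 0) then p i j else 0) := by
      have h1 : ∀ j, (if T'.Reachable (inr j) (inr 0) then (∑ i, y i • p i) j else 0)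
          = ∑ i, (if T'.Reachable (inr j) (inr 0) then y i * p i j else 0) := by
        intro j; split
        · simp [Finset.sum_apply]
        · simp
      rw [Finset.sum_congr rfl fun j _ => h1 j, Finset.sum_comm]
      refine Finset.sum_congr rfl fun i _ => ?_
      rw [Finset.mul_sum]
      exact Finset.sum_congr rfl fun j _ => by rw [mul_ite, mul_zero]
    rw [hswap]
    refine Finset.sum_le_sum fun i _ => ?_
    split
    · rename_i hRi
      have hs : (∑ j, if T'.Reachable (inr j) (inr 0) then p i j else 0) = 1 := by
        rw [← (hp i).2.2]
        refine Finset.sum_congr rfl fun j _ => ?_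
        by_cases hpj : p i j = 0
        · simp [hpj]
        · have hadj : T.Adj (inl i) (inr j) := by
            by_contra hc; exact hpj ((hp i).2.1 j hc)
          have hne : ¬(i = a ∧ j = b) := by
            rintro ⟨rfl, rfl⟩; exact hna hRi
          rw [if_pos ((hequiv i j hadj hne).mp hRi)]
      rw [hs, mul_one]
    · exact mul_nonneg (hy i) (Finset.sum_nonneg fun j _ => by
        split
        · exact (hp i).1 j
        · exact le_rfl)
  · -- case: inr b not in the component of inr 0
    intro hb x hx
    obtain ⟨p, hp, rfl⟩ := hx
    have hRa : T'.Reachable (inl a) (inr 0) := by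
      rcases hcomp (inr 0) with h | h
      · exact h.symm
      · exact absurd h.symm hb
    have hswap : (∑ j, if T'.Reachable (inr j) (inr 0) then (∑ i, y i • p i) j else 0)
        = ∑ i, y i * ∑ j, (if T'.Reachable (inr j) (inr 0) then p i j else 0) := by
      have h1 : ∀ j, (if T'.Reachable (inr j) (inr 0) then (∑ i, y i • p i) j else 0)
          = ∑ i, (if T'.Reachable (inr j) (inr 0) then y i * p i j else 0) := by
        intro j; split
        · simp [Finset.sum_apply]
        · simp
      rw [Finset.sum_congr rfl fun j _ => h1 j, Finset.sum_comm]
      refine Finset.sum_congr rfl fun i _ => ?_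
      rw [Finset.mul_sum]
      exact Finset.sum_congr rfl fun j _ => by rw [mul_ite, mul_zero]
    rw [hswap]
    refine Finset.sum_le_sum fun i _ => ?_
    split
    · rename_i hRi
      have hs1 : (∑ j, if T'.Reachable (inr j) (inr 0) then p i j else 0) ≤ 1 := by
        rw [← (hp i).2.2]
        refine Finset.sum_le_sum fun j _ => ?_
        split
        · exact le_rfl
        · exact (hp i).1 j
      calc y i * ∑ j, (if T'.Reachable (inr j) (inr 0) then p i j else 0)
          ≤ y i * 1 := mul_le_mul_of_nonneg_left hs1 (hy i)
        _ = y i := mul_one _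
    · rename_i hRi
      have hs0 : (∑ j, if T'.Reachable (inr j) (inr 0) then p i j else 0) = 0 := by
        refine Finset.sum_eq_zero fun j _ => ?_
        split
        · rename_i hRj
          by_cases hpj : p i j = 0
          · exact hpj
          · have hadj : T.Adj (inl i) (inr j) := by
              by_contra hc; exact hpj ((hp i).2.1 j hc)
            have hne : ¬(i = a ∧ j = b) := by
              rintro ⟨rfl, rfl⟩; exact hRi hRa
            exact absurd ((hequiv i j hadj hne).mpr hRj) hRi
        · rfl
      rw [hs0, mul_zero]
end

section
/- Any lattice point of a fine Minkowski cell ∏_T = y_1Δ_{T_1}+⋯+y_mΔ_{T_m}, where T is a spanning tree of G ⊆ K_{m,n} with ∑_i(|T_i|−1)=n−1 and the y_i are nonnegative integers, is uniquely expressed as p_1+⋯+p_m where each p_i is a lattice point of y_iΔ_{T_i}. -/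
/-!
Two decompositions of the same lattice point differ by an integer matrix supported on the
edges of the tree `T` whose row and column sums vanish. Every edge of a forest is a bridge, so
removing it splits the vertices into two sides with no other edge between them; adding the row
sums of the left vertices on the side of the edge and subtracting the column sums of the right
vertices on that side cancels every entry except that of the bridge, which therefore vanishes.
-/

open SimpleGraph Sum Finset

theorem SimpleGraph.IsAcyclic.exists_separating_set {V : Type*} {T : SimpleGraph V}
    (hT : T.IsAcyclic) {u v : V} (huv : T.Adj u v) :
    ∃ C : Set V, u ∈ C ∧ v ∉ C ∧
      ∀ a b, T.Adj a b → s(a, b) ≠ s(u, v) → (a ∈ C ↔ b ∈ C) := by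
  have hbridge := isBridge_iff.mp (isAcyclic_iff_forall_adj_isBridge.mp hT huv)
  refine ⟨{w | (T.deleteEdges {s(u, v)}).Reachable u w}, Reachable.refl _, hbridge, ?_⟩
  intro a b hab hne
  have hadj : (T.deleteEdges {s(u, v)}).Adj a b := by simp [hab, hne]
  exact ⟨fun h => h.trans hadj.reachable, fun h => h.trans hadj.symm.reachable⟩

theorem apply_eq_zero_of_sums_eq_zero_of_cut {α β M : Type*} [Fintype α] [Fintype β]
    [AddCommGroup M] (d : α → β → M)
    (hrow : ∀ i, ∑ j, d i j = 0) (hcol : ∀ j, ∑ i, d i j = 0)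
    (A : Finset α) (B : Finset β) {i₀ : α} {j₀ : β} (hi₀ : i₀ ∈ A) (hj₀ : j₀ ∉ B)
    (hcut : ∀ i j, d i j ≠ 0 → (i, j) ≠ (i₀, j₀) → (i ∈ A ↔ j ∈ B)) :
    d i₀ j₀ = 0 := by
  classical
  have hterm : ∀ i j, (if i ∈ A then d i j else 0) - (if j ∈ B then d i j else 0)
      = if i = i₀ ∧ j = j₀ then d i₀ j₀ else 0 := by
    intro i j
    by_cases hij : i = i₀ ∧ j = j₀
    · obtain ⟨rfl, rfl⟩ := hij
      simp [hi₀, hj₀]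
    by_cases hd : d i j = 0
    · simp [hd, hij]
    have hAB := hcut i j hd (by simpa using hij)
    by_cases hi : i ∈ A
    · simp [hi, hAB.mp hi, hij]
    · simp [hi, mt hAB.mpr hi, hij]
  calc d i₀ j₀ = ∑ i, ∑ j, ((if i ∈ A then d i j else 0) - (if j ∈ B then d i j else 0)) := by
        simp [hterm, ite_and]
    _ = 0 := by
        simp only [sum_sub_distrib]
        rw [sum_comm (f := fun i j => if j ∈ B then d i j else 0)]
        simp [hrow, hcol]

theorem SimpleGraph.IsAcyclic.eq_zero_of_sums_eq_zero {α β M : Type*} [Fintype α] [Fintype β]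
    [AddCommGroup M] {T : SimpleGraph (α ⊕ β)} (hT : T.IsAcyclic) (d : α → β → M)
    (hsupp : ∀ i j, ¬ T.Adj (inl i) (inr j) → d i j = 0)
    (hrow : ∀ i, ∑ j, d i j = 0) (hcol : ∀ j, ∑ i, d i j = 0) :
    d = 0 := by
  classical
  have hadj : ∀ i j, d i j ≠ 0 → T.Adj (inl i) (inr j) := fun i j =>
    not_imp_comm.mp (hsupp i j)
  funext i₀ j₀
  by_contra hne
  obtain ⟨C, hi₀, hj₀, hcut⟩ := hT.exists_separating_set (hadj i₀ j₀ hne)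
  refine hne (apply_eq_zero_of_sums_eq_zero_of_cut d hrow hcol {i | inl i ∈ C} {j | inr j ∈ C}
    (by simpa) (by simpa) fun i j hd hij => ?_)
  simpa using hcut _ _ (hadj i j hd) (by simpa using hij)

theorem SimpleGraph.IsAcyclic.eq_of_sums_eq {α β : Type*} [Fintype α] [Fintype β]
    {T : SimpleGraph (α ⊕ β)} (hT : T.IsAcyclic) {p q : α → β → ℕ}
    (hp : ∀ i j, ¬ T.Adj (inl i) (inr j) → p i j = 0)
    (hq : ∀ i j, ¬ T.Adj (inl i) (inr j) → q i j = 0)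
    (hrow : ∀ i, ∑ j, p i j = ∑ j, q i j) (hcol : ∀ j, ∑ i, p i j = ∑ i, q i j) :
    p = q := by
  have hdiff := hT.eq_zero_of_sums_eq_zero (fun i j => (p i j : ℤ) - q i j)
    (fun i j h => by simp [hp i j h, hq i j h])
    (fun i => by simp [sum_sub_distrib, ← Nat.cast_sum, hrow i])
    (fun j => by simp [sum_sub_distrib, ← Nat.cast_sum, hcol j])
  funext i j
  simpa [sub_eq_zero] using congrFun (congrFun hdiff i) j

theorem cell_lattice_point_unique_sum_general (m n : ℕ)
    (T : SimpleGraph (Fin m ⊕ Fin n))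
    (htree : T.IsTree)
    (y : Fin m → ℕ) :
    ∀ x : Fin n → ℕ,
      (∃ p : Fin m → Fin n → ℕ,
        (∀ i, (∀ k, ¬ T.Adj (inl i) (inr k) → p i k = 0) ∧ ∑ k, p i k = y i) ∧
        x = ∑ i, p i) →
      ∃! p : Fin m → Fin n → ℕ,
        (∀ i, (∀ k, ¬ T.Adj (inl i) (inr k) → p i k = 0) ∧ ∑ k, p i k = y i) ∧
        x = ∑ i, p i := by
  rintro x ⟨p, hp, rfl⟩
  refine ⟨p, ⟨hp, rfl⟩, fun q ⟨hq, hpq⟩ => htree.isAcyclic.eq_of_sums_eq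
    (fun i => (hq i).1) (fun i => (hp i).1) (fun i => (hq i).2.trans (hp i).2.symm) fun j => ?_⟩
  simpa [Finset.sum_apply] using (congrFun hpq j).symm

/-- Any lattice point of a fine Minkowski cell
`∏_T = y_1Δ_{T_1} + ⋯ + y_mΔ_{T_m}`, where `T` is a spanning tree of bipartite
`G ⊆ K_{m,n}` with `∑ (|T_i|−1) = n−1` and the `y_i` are nonnegative integers,
is uniquely expressed as `p_1 + ⋯ + p_m` with `p_i` a lattice point of
`y_iΔ_{T_i}` (a nonnegative integer vector supported on `T_i` summing to `y_i`). -/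
theorem cell_lattice_point_unique_sum (m n : ℕ) [NeZero n]
    (G T : SimpleGraph (Fin m ⊕ Fin n))
    (hGbip : (∀ i j : Fin m, ¬ G.Adj (inl i) (inl j)) ∧
             (∀ i j : Fin n, ¬ G.Adj (inr i) (inr j)))
    (hsub : T ≤ G) (htree : T.IsTree)
    (hfine : ∑ i : Fin m, (({j : Fin n | T.Adj (inl i) (inr j)}.ncard : ℤ) - 1)
      = (n : ℤ) - 1)
    (y : Fin m → ℕ) :
    ∀ x : Fin n → ℕ,
      (∃ p : Fin m → Fin n → ℕ,
        (∀ i, (∀ k, ¬ T.Adj (inl i) (inr k) → p i k = 0) ∧ ∑ k, p i k = y i) ∧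
        x = ∑ i, p i) →
      ∃! p : Fin m → Fin n → ℕ,
        (∀ i, (∀ k, ¬ T.Adj (inl i) (inr k) → p i k = 0) ∧ ∑ k, p i k = y i) ∧
        x = ∑ i, p i :=
  cell_lattice_point_unique_sum_general m n T htree y
end

section
/- Let T be a spanning tree of the bipartite graph G ⊆ K_{m,n} with neighborhood sets T_i ⊆ [n] for left vertices. Then the left degree vector (|T_1|−1,…,|T_m|−1) is a G-draconian sequence: ∑_i(|T_i|−1) = n−1 and for any subset {i_1 < ⋯ < i_k} ⊆ [m], |T_{i_1} ∪ ⋯ ∪ T_{i_k}| ≥ (|T_{i_1}|−1)+⋯+(|T_{i_k}|−1)+1. -/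
/-! Every edge of `T` has exactly one left endpoint, so `∑ |T_i|` counts the `m + n - 1` edges
of the tree. For nonempty `S`, the edges at `S` form a subforest of `T` on the vertex set
`S ⊔ ⋃_{i ∈ S} T_i`, and a forest on a nonempty finite vertex set has fewer edges than
vertices. -/

open SimpleGraph Sum Finset

namespace SimpleGraph

variable {V : Type*} {G : SimpleGraph V}

theorem IsAcyclic.card_edgeFinset_add_one_le [Fintype V] [Nonempty V] [Fintype G.edgeSet]
    (hG : G.IsAcyclic) : #G.edgeFinset + 1 ≤ Fintype.card V := by
  obtain ⟨F, hGF, -, hF⟩ := connected_top.exists_isTree_le_of_le_of_isAcyclic le_top hG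
  classical
  rw [← hF.card_edgeFinset]
  gcongr

theorem IsAcyclic.card_edgeFinset_add_one_le_of_support_subset [Fintype V] [DecidableRel G.Adj]
    (hG : G.IsAcyclic) {s : Finset V} (hs : s.Nonempty) (hsupp : G.support ⊆ s) :
    #G.edgeFinset + 1 ≤ #s := by
  classical
  have : Nonempty s := hs.to_subtype
  rw [← card_edgeFinset_induce_of_support_subset hsupp]
  convert (hG.induce s).card_edgeFinset_add_one_le using 1
  · congr!
  · simp

theorem IsAcyclic.sum_degree_add_one_le_of_isIndepSet [Fintype V] [DecidableEq V]
    [DecidableRel G.Adj] (hG : G.IsAcyclic) {A : Finset V} (hA : A.Nonempty)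
    (hind : G.IsIndepSet A) :
    ∑ v ∈ A, G.degree v + 1 ≤ #A + #(A.biUnion fun v => G.neighborFinset v) := by
  set N := A.biUnion fun v => G.neighborFinset v
  have hdisj : Disjoint A N := by
    refine Finset.disjoint_left.mpr fun v hv hvN => ?_
    obtain ⟨u, hu, huv⟩ := Finset.mem_biUnion.mp hvN
    have huv' := (G.mem_neighborFinset u v).mp huv
    exact hind hu hv huv'.ne huv'
  set H := G.between A N
  have hH : H.IsBipartiteWith A N := between_isBipartiteWith (disjoint_coe.mpr hdisj)
  have hdeg : ∀ v ∈ A, H.degree v = G.degree v := by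
    intro v hv
    simp only [← card_neighborFinset_eq_degree]
    congr 1
    ext w
    simp only [mem_neighborFinset, H, between_adj, mem_coe]
    exact and_iff_left_of_imp fun hvw =>
      Or.inl ⟨hv, mem_biUnion.mpr ⟨v, hv, (G.mem_neighborFinset v w).mpr hvw⟩⟩
  calc ∑ v ∈ A, G.degree v + 1 = #H.edgeFinset + 1 := by
        rw [← isBipartiteWith_sum_degrees_eq_card_edges hH, sum_congr rfl hdeg]
    _ ≤ #(A ∪ N) := (hG.anti between_le).card_edgeFinset_add_one_le_of_support_subset
        (hA.mono subset_union_left) (by simpa using isBipartiteWith_support_subset hH)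
    _ = #A + #N := card_union_of_disjoint hdisj

theorem IsBipartiteWith.isIndepSet_left {s t : Set V} (h : G.IsBipartiteWith s t) :
    G.IsIndepSet s := fun _ hv _ hw _ hvw =>
  (h.mem_of_adj hvw).elim (fun hvw' => Set.disjoint_left.mp h.disjoint hw hvw'.2)
    fun hvw' => Set.disjoint_left.mp h.disjoint hv hvw'.1

section Sum

variable {α β : Type*} {G : SimpleGraph (α ⊕ β)}

theorem isBipartiteWith_range_inl_range_inr (hl : ∀ i j, ¬G.Adj (inl i) (inl j))
    (hr : ∀ i j, ¬G.Adj (inr i) (inr j)) :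
    G.IsBipartiteWith (Set.range inl) (Set.range inr) where
  disjoint := Set.isCompl_range_inl_range_inr.disjoint
  mem_of_adj
    | inl _, inl _, h => (hl _ _ h).elim
    | inl _, inr _, _ => .inl ⟨⟨_, rfl⟩, ⟨_, rfl⟩⟩
    | inr _, inl _, _ => .inr ⟨⟨_, rfl⟩, ⟨_, rfl⟩⟩
    | inr _, inr _, h => (hr _ _ h).elim

theorem IsBipartiteWith.neighborSet_inl_subset_range_inr
    (hG : G.IsBipartiteWith (Set.range inl) (Set.range inr)) (i : α) :
    G.neighborSet (inl i) ⊆ Set.range inr :=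
  fun _ => hG.mem_of_mem_adj ⟨i, rfl⟩

theorem IsBipartiteWith.degree_inl_eq_ncard [Fintype α] [Fintype β] [DecidableRel G.Adj]
    (hG : G.IsBipartiteWith (Set.range inl) (Set.range inr)) (i : α) :
    G.degree (inl i) = {j | G.Adj (inl i) (inr j)}.ncard := by
  rw [← card_neighborSet_eq_degree, ← Nat.card_eq_fintype_card, Nat.card_coe_set_eq]
  exact (Set.ncard_preimage_of_injective_subset_range inr_injective
    (hG.neighborSet_inl_subset_range_inr i)).symm

theorem IsBipartiteWith.ncard_iUnion_eq_card_biUnion [Fintype α] [Fintype β] [DecidableEq α]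
    [DecidableEq β] [DecidableRel G.Adj] (hG : G.IsBipartiteWith (Set.range inl) (Set.range inr))
    (S : Finset α) :
    (⋃ i ∈ (S : Set α), {j | G.Adj (inl i) (inr j)}).ncard
      = #((S.image inl).biUnion fun v => G.neighborFinset v) := by
  have hsub : (↑((S.image inl).biUnion fun v => G.neighborFinset v) : Set (α ⊕ β))
      ⊆ Set.range inr := by
    intro w hw
    simp only [coe_biUnion, coe_image, Set.mem_iUnion] at hw
    obtain ⟨_, ⟨i, -, rfl⟩, hw⟩ := hw
    exact hG.neighborSet_inl_subset_range_inr i (by simpa using hw)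
  rw [← Set.ncard_coe_finset, ← Set.ncard_preimage_of_injective_subset_range inr_injective hsub]
  congr 1
  ext j
  simp

theorem IsBipartiteWith.sum_degree_inl_eq_card_edgeFinset [Fintype α] [Fintype β]
    [DecidableRel G.Adj] (hG : G.IsBipartiteWith (Set.range inl) (Set.range inr)) :
    ∑ i, G.degree (inl i) = #G.edgeFinset := by
  classical
  rw [← isBipartiteWith_sum_degrees_eq_card_edges (s := univ.image inl) (t := univ.image inr)]
  · rw [sum_image inl_injective.injOn]
  · simpa using hG

end Sum

end SimpleGraph

/-- For a spanning tree `T` of the bipartite graph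
`G ⊆ K_{m,n}` with left neighborhoods `T_i ⊆ [n]`, the left degree vector
`(|T_1|−1, …, |T_m|−1)` is `G`-draconian: `∑ (|T_i|−1) = n−1` and for every
nonempty subset `S ⊆ [m]`, `|⋃_{i∈S} T_i| ≥ ∑_{i∈S}(|T_i|−1) + 1`. -/
theorem left_degree_vector_draconian (m n : ℕ)
    (G T : SimpleGraph (Fin m ⊕ Fin n))
    (hGbip : (∀ i j : Fin m, ¬ G.Adj (inl i) (inl j)) ∧
             (∀ i j : Fin n, ¬ G.Adj (inr i) (inr j)))
    (hsub : T ≤ G) (htree : T.IsTree) :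
    (∑ i : Fin m, (({j : Fin n | T.Adj (inl i) (inr j)}.ncard : ℤ) - 1)
        = (n : ℤ) - 1) ∧
    ∀ S : Finset (Fin m), S.Nonempty →
      (∑ i ∈ S, (({j : Fin n | T.Adj (inl i) (inr j)}.ncard : ℤ) - 1)) + 1
        ≤ ((⋃ i ∈ (S : Set (Fin m)), {j : Fin n | T.Adj (inl i) (inr j)}).ncard : ℤ) := by
  classical
  have hbip : T.IsBipartiteWith (Set.range inl) (Set.range inr) :=
    isBipartiteWith_range_inl_range_inr (fun i j h => hGbip.1 i j (hsub h))
      (fun i j h => hGbip.2 i j (hsub h))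
  have hsum (S : Finset (Fin m)) :
      ∑ i ∈ S, (({j : Fin n | T.Adj (inl i) (inr j)}.ncard : ℤ) - 1)
        = ((∑ i ∈ S, T.degree (inl i) : ℕ) : ℤ) - #S := by
    simp [sum_sub_distrib, hbip.degree_inl_eq_ncard]
  refine ⟨?_, fun S hS => ?_⟩
  · have hedges := htree.card_edgeFinset
    rw [Fintype.card_sum, Fintype.card_fin, Fintype.card_fin,
      ← hbip.sum_degree_inl_eq_card_edgeFinset] at hedges
    rw [hsum, card_univ, Fintype.card_fin]
    omega
  · have hforest := htree.isAcyclic.sum_degree_add_one_le_of_isIndepSet (hS.image inl)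
      (hbip.isIndepSet_left.mono (by simp))
    rw [sum_image inl_injective.injOn, card_image_of_injective _ inl_injective,
       ← hbip.ncard_iUnion_eq_card_biUnion] at hforest
    rw [hsum]
    omega
end
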